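/- An even nonnegative integer n satisfies v(n) = 2 if and only if n ∈ {18, 22, 24, 28}. -/

import Mathlib

/-- The value of a word over the digits `{0,1,2}`, read as a (hyper)binary expansion:
`wordVal (x₀ … x_k) = Σ x_i · 2^(k-i)`. -/
def wordVal : List ℕ → ℕ
  | [] => 0
  | d :: w => d * 2 ^ w.length + wordVal w

/-- `Hyp n` is the set of hyperbinary expansions of `n`: words over `{0,1,2}` with
nonzero leading digit whose value is `n` (the empty word is the unique expansion of `0`). -/
def Hyp (n : ℕ) : Set (List ℕ) :=
  {w | (∀ d ∈ w, d ≤ 2) ∧ w.head? ≠ some 0 ∧ wordVal w = n}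

/-- Single-step reduction of type `→` : `(x02y, x10y)` or `(2y, 10y)`. -/
def StepArrow (a b : List ℕ) : Prop :=
  (∃ x y : List ℕ, a = x ++ 0 :: 2 :: y ∧ b = x ++ 1 :: 0 :: y) ∨
    (∃ y : List ℕ, a = 2 :: y ∧ b = 1 :: 0 :: y)

/-- Single-step reduction of type `↠` : `(x12y, x20y)`. -/
def StepDouble (a b : List ℕ) : Prop :=
  ∃ x y : List ℕ, a = x ++ 1 :: 2 :: y ∧ b = x ++ 2 :: 0 :: y

/-- A single-step reduction (of either type). -/
def Step (a b : List ℕ) : Prop := StepArrow a b ∨ StepDouble a b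

/-- `bFun n` is the number of hyperbinary expansions of `n`. -/
noncomputable def bFun (n : ℕ) : ℕ := (Hyp n).ncard

/-- The set of arcs of the graph `A(n)`: labeled single-step reductions between
hyperbinary expansions of `n`. -/
def arcs (n : ℕ) : Set (List ℕ × List ℕ) :=
  {p | p.1 ∈ Hyp n ∧ p.2 ∈ Hyp n ∧ Step p.1 p.2}

/-- `aFun n` is the number of arcs of `A(n)`. -/
noncomputable def aFun (n : ℕ) : ℕ := (arcs n).ncard

/-- The cyclomatic number `v(n) = a(n) - b(n) + 1` of the connected graph `A(n)`. -/
noncomputable def vFun (n : ℕ) : ℕ := aFun n + 1 - bFun n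

/- ## Part 1: word values -/

lemma wordVal_append (u v : List ℕ) :
    wordVal (u ++ v) = wordVal u * 2 ^ v.length + wordVal v := by
  induction u with
  | nil => simp [wordVal]
  | cons d t ih => simp [wordVal, ih, pow_add]; ring

lemma wordVal_concat (u : List ℕ) (d : ℕ) :
    wordVal (u ++ [d]) = 2 * wordVal u + d := by
  simp [wordVal_append, wordVal]; ring

lemma hyp_zero : Hyp 0 = {[]} := by
  ext w
  constructor
  · rintro ⟨hd, hh, hv⟩
    cases w with
    | nil => rfl
    | cons d t =>
      exfalso
      have hd0 : d ≠ 0 := by simpa using hh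
      have : 1 ≤ d * 2 ^ t.length := Nat.one_le_iff_ne_zero.mpr (by positivity)
      simp [wordVal] at hv
      omega
  · rintro rfl
    exact ⟨by simp, by simp, rfl⟩

lemma hyp_pos_ne_nil {n : ℕ} {w : List ℕ} (hn : n ≠ 0) (hw : w ∈ Hyp n) : w ≠ [] := by
  rintro rfl
  exact hn (hw.2.2.symm ▸ rfl)

/- ## Part 2: structure of Hyp -/

lemma head?_concat_ne_zero {u : List ℕ} {d : ℕ} (hu : u.head? ≠ some 0) (hd : d ≠ 0) :
    (u ++ [d]).head? ≠ some 0 := by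
  cases u with
  | nil => simpa using hd
  | cons a t => simpa using hu

lemma mem_hyp_concat {n : ℕ} {u : List ℕ} {d : ℕ} (hu : u ∈ Hyp n) (hd : d ≤ 2) (hd0 : u = [] → d ≠ 0) :
    u ++ [d] ∈ Hyp (2 * n + d) := by
  obtain ⟨h1, h2, h3⟩ := hu
  refine ⟨?_, ?_, by rw [wordVal_concat, h3]⟩
  · intro x hx
    simp at hx
    rcases hx with hx | hx
    · exact h1 x hx
    · omega
  cases u with
  | nil => simpa using hd0 rfl
  | cons a t => simpa using h2

lemma hyp_decomp {n : ℕ} {w : List ℕ} (hn : n ≠ 0) (hw : w ∈ Hyp n) :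
    ∃ u d, w = u ++ [d] ∧ d ≤ 2 ∧ 2 * wordVal u + d = n ∧ u ∈ Hyp (wordVal u) := by
  have hne : w ≠ [] := hyp_pos_ne_nil hn hw
  rcases w.eq_nil_or_concat with rfl | ⟨u, d, rfl⟩
  · exact absurd rfl hne
  rw [List.concat_eq_append] at *
  obtain ⟨h1, h2, h3⟩ := hw
  have hval : 2 * wordVal u + d = n := by rw [← h3, wordVal_concat]
  refine ⟨u, d, rfl, h1 d (by simp), hval, ?_, ?_, rfl⟩
  · intro x hx
    exact h1 x (by simp [hx])
  · cases u with
    | nil => simp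
    | cons a t => simpa using h2

lemma hyp_odd (n : ℕ) : Hyp (2 * n + 1) = (· ++ [1]) '' Hyp n := by
  ext w
  constructor
  · intro hw
    obtain ⟨u, d, rfl, hd, hval, hu⟩ := hyp_decomp (by omega) hw
    have hd1 : d = 1 := by omega
    have hun : wordVal u = n := by omega
    exact ⟨u, hun ▸ hu, by rw [hd1]⟩
  · rintro ⟨u, hu, rfl⟩
    have := mem_hyp_concat (d := 1) hu one_le_two (fun _ => one_ne_zero)
    simpa [hu.2.2] using this

lemma hyp_even (n : ℕ) :
    Hyp (2 * n + 2) = (· ++ [0]) '' Hyp (n + 1) ∪ (· ++ [2]) '' Hyp n := by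
  ext w
  constructor
  · intro hw
    obtain ⟨u, d, rfl, hd, hval, hu⟩ := hyp_decomp (by omega) hw
    have : d = 0 ∨ d = 2 := by omega
    rcases this with rfl | rfl
    · left
      have hun : wordVal u = n + 1 := by omega
      exact ⟨u, hun ▸ hu, rfl⟩
    · right
      have hun : wordVal u = n := by omega
      exact ⟨u, hun ▸ hu, rfl⟩
  · rintro (⟨u, hu, rfl⟩ | ⟨u, hu, rfl⟩)
    · have hune : u ≠ [] := hyp_pos_ne_nil (by omega) hu
      have := mem_hyp_concat (d := 0) hu (Nat.zero_le 2) (fun h => absurd h hune)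
      simpa [hu.2.2, Nat.mul_add] using this
    · have := mem_hyp_concat (d := 2) hu (by norm_num) (fun _ => by norm_num)
      simpa [hu.2.2] using this

lemma hyp_finite (n : ℕ) : (Hyp n).Finite := by
  induction n using Nat.strong_induction_on with
  | _ n ih =>
    obtain ⟨m, rfl | rfl⟩ := Nat.even_or_odd' n
    · cases m with
      | zero => rw [show 2*0 = 0 by rfl, hyp_zero]; exact Set.finite_singleton _
      | succ k =>
        rw [show 2 * (k+1) = 2 * k + 2 by ring, hyp_even]
        exact ((ih (k+1) (by omega)).image _).union ((ih k (by omega)).image _)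
    · rw [hyp_odd]
      exact (ih m (by omega)).image _

/- ## Part 3: successors -/

def isuc : List ℕ → List (List ℕ)
  | x :: y :: l =>
      (if x = 0 ∧ y = 2 then [1 :: 0 :: l] else []) ++
      (if x = 1 ∧ y = 2 then [2 :: 0 :: l] else []) ++
      (isuc (y :: l)).map (x :: ·)
  | _ => []

lemma isuc_cons (x y : ℕ) (l : List ℕ) :
    isuc (x :: y :: l) =
      (if x = 0 ∧ y = 2 then [1 :: 0 :: l] else []) ++
      (if x = 1 ∧ y = 2 then [2 :: 0 :: l] else []) ++
      (isuc (y :: l)).map (x :: ·) := rfl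

lemma isuc_nil : isuc [] = [] := rfl

lemma isuc_single (x : ℕ) : isuc [x] = [] := rfl

def succs (w : List ℕ) : List (List ℕ) :=
  (if w.head? = some 2 then [1 :: 0 :: w.tail] else []) ++ isuc w

lemma mem_isuc_iff (w b : List ℕ) :
    b ∈ isuc w ↔ ((∃ x y, w = x ++ 0 :: 2 :: y ∧ b = x ++ 1 :: 0 :: y) ∨
      (∃ x y, w = x ++ 1 :: 2 :: y ∧ b = x ++ 2 :: 0 :: y)) := by
  induction w generalizing b with
  | nil =>
    constructor
    · intro h; simp [isuc] at h
    · rintro (⟨x, y, h, -⟩ | ⟨x, y, h, -⟩) <;> exact absurd h (by simp)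
  | cons a t ih =>
    cases t with
    | nil =>
      constructor
      · intro h; simp [isuc_single] at h
      · rintro (⟨x, y, h, -⟩ | ⟨x, y, h, -⟩) <;>
          (rcases x with _ | ⟨c, x⟩ <;> simp at h)
    | cons e l =>
      constructor
      · intro h
        simp only [isuc_cons, List.mem_append, List.mem_map] at h
        rcases h with ((h | h) | ⟨b', hb', rfl⟩)
        · rw [List.mem_ite_nil_right] at h
          obtain ⟨⟨rfl, rfl⟩, h⟩ := h
          simp at h
          exact Or.inl ⟨[], l, by simp, by simp [h]⟩
        · rw [List.mem_ite_nil_right] at h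
          obtain ⟨⟨rfl, rfl⟩, h⟩ := h
          simp at h
          exact Or.inr ⟨[], l, by simp, by simp [h]⟩
        · rcases (ih b').1 hb' with ⟨x, y, h1, h2⟩ | ⟨x, y, h1, h2⟩
          · exact Or.inl ⟨a :: x, y, by simp [h1], by simp [h2]⟩
          · exact Or.inr ⟨a :: x, y, by simp [h1], by simp [h2]⟩
      · rintro (⟨x, y, h1, rfl⟩ | ⟨x, y, h1, rfl⟩) <;>
          rcases x with _ | ⟨c, x⟩
        · obtain ⟨rfl, rfl, rfl⟩ : a = 0 ∧ e = 2 ∧ l = y := by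
            simpa using h1
          simp [isuc_cons]
        · obtain ⟨rfl, h2⟩ : a = c ∧ e :: l = x ++ 0 :: 2 :: y := by
            simpa using h1
          simp only [isuc_cons, List.mem_append, List.mem_map]
          exact Or.inr ⟨x ++ 1 :: 0 :: y, (ih _).2 (Or.inl ⟨x, y, h2, rfl⟩), by simp⟩
        · obtain ⟨rfl, rfl, rfl⟩ : a = 1 ∧ e = 2 ∧ l = y := by
            simpa using h1
          simp [isuc_cons]
        · obtain ⟨rfl, h2⟩ : a = c ∧ e :: l = x ++ 1 :: 2 :: y := by
            simpa using h1
          simp only [isuc_cons, List.mem_append, List.mem_map]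
          exact Or.inr ⟨x ++ 2 :: 0 :: y, (ih _).2 (Or.inr ⟨x, y, h2, rfl⟩), by simp⟩

lemma mem_succs_iff (w b : List ℕ) : Step w b ↔ b ∈ succs w := by
  unfold succs
  rw [List.mem_append, mem_isuc_iff]
  unfold Step StepArrow StepDouble
  constructor
  · rintro ((⟨x, y, hw, hb⟩ | ⟨y, hw, hb⟩) | ⟨x, y, hw, hb⟩)
    · exact Or.inr (Or.inl ⟨x, y, hw, hb⟩)
    · subst hw; exact Or.inl (by simp [hb])
    · exact Or.inr (Or.inr ⟨x, y, hw, hb⟩)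
  · rintro (h | (h | h))
    · rw [List.mem_ite_nil_right] at h
      obtain ⟨hh, hb⟩ := h
      obtain rfl : b = 1 :: 0 :: w.tail := by simpa using hb
      cases w with
      | nil => simp at hh
      | cons d t =>
        obtain rfl : d = 2 := by simpa using hh
        exact Or.inl (Or.inr ⟨t, rfl, rfl⟩)
    · exact Or.inl (Or.inl h)
    · exact Or.inr h

/- length of isuc under concatenation -/

lemma isuc_length_concat (u : List ℕ) (d : ℕ) :
    (isuc (u ++ [d])).length = (isuc u).length +
      (if d = 2 ∧ (u.getLast? = some 0 ∨ u.getLast? = some 1) then 1 else 0) := by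
  induction u with
  | nil => simp [isuc_nil, isuc_single]
  | cons x t ih =>
    cases t with
    | nil =>
      simp only [List.singleton_append, isuc_cons, isuc_nil, isuc_single, List.length_append,
        List.map_nil, List.getLast?_singleton]
      split_ifs <;> simp_all <;> omega
    | cons y l =>
      have : (x :: y :: l) ++ [d] = x :: y :: (l ++ [d]) := by simp
      rw [this, isuc_cons, isuc_cons]
      have h2 : y :: (l ++ [d]) = (y :: l) ++ [d] := by simp
      rw [h2]
      simp only [List.length_append, List.length_map, ih, List.getLast?_cons_cons]
      split_ifs <;> (try simp) <;> omega

lemma succs_length (w : List ℕ) :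
    (succs w).length = (isuc w).length + (if w.head? = some 2 then 1 else 0) := by
  unfold succs
  split_ifs <;> simp <;> omega

lemma head?_concat (u : List ℕ) (d : ℕ) (hu : u ≠ []) : (u ++ [d]).head? = u.head? := by
  cases u with
  | nil => exact absurd rfl hu
  | cons a t => simp

lemma succs_length_concat_le_one (u : List ℕ) (d : ℕ) (hd : d ≤ 1) :
    (succs (u ++ [d])).length = (succs u).length := by
  rw [succs_length, succs_length, isuc_length_concat]
  have h2 : ¬ (d = 2 ∧ (u.getLast? = some 0 ∨ u.getLast? = some 1)) := by
    rintro ⟨rfl, -⟩; omega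
  rw [if_neg h2]
  cases u with
  | nil =>
    simp only [List.nil_append, List.head?_nil, List.head?_cons]
    have hd2 : ¬ ((some d : Option ℕ) = some 2) := by simp; omega
    simp [hd2]
  | cons a t =>
    rw [head?_concat _ _ (by simp)]
    omega

lemma succs_length_concat_two (u : List ℕ) :
    (succs (u ++ [2])).length = (succs u).length +
      (if u.getLast? = some 0 ∨ u.getLast? = some 1 then 1 else 0) +
      (if u = [] then 1 else 0) := by
  rw [succs_length, succs_length, isuc_length_concat]
  cases u with
  | nil => simp [isuc_nil]
  | cons a t =>
    rw [head?_concat _ _ (by simp)]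
    simp only [if_neg (by simp : ¬(a :: t = [])), true_and]
    omega

/- nodup -/

lemma mem_isuc_length {w b : List ℕ} (h : b ∈ isuc w) : b.length = w.length := by
  rcases (mem_isuc_iff w b).1 h with ⟨x, y, rfl, rfl⟩ | ⟨x, y, rfl, rfl⟩ <;> simp

lemma isuc_nodup (w : List ℕ) : (isuc w).Nodup := by
  induction w with
  | nil => simp [isuc_nil]
  | cons a t ih =>
    cases t with
    | nil => simp [isuc_single]
    | cons y l =>
      rw [isuc_cons]
      have hmap : ((isuc (y :: l)).map (a :: ·)).Nodup :=
        List.Nodup.map (fun b c h => by simpa using h) ih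
      by_cases h0 : a = 0 ∧ y = 2
      · obtain ⟨rfl, rfl⟩ := h0
        rw [if_pos ⟨rfl, rfl⟩, if_neg (by norm_num), List.append_nil,
          List.singleton_append, List.nodup_cons]
        refine ⟨fun hm => ?_, hmap⟩
        obtain ⟨b', -, hb⟩ := List.mem_map.1 hm
        simp at hb
      · by_cases h1 : a = 1 ∧ y = 2
        · obtain ⟨rfl, rfl⟩ := h1
          rw [if_neg (by norm_num), if_pos ⟨rfl, rfl⟩, List.nil_append,
            List.singleton_append, List.nodup_cons]
          refine ⟨fun hm => ?_, hmap⟩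
          obtain ⟨b', -, hb⟩ := List.mem_map.1 hm
          simp at hb
        · rw [if_neg h0, if_neg h1, List.append_nil, List.nil_append]
          exact hmap

lemma succs_nodup (w : List ℕ) : (succs w).Nodup := by
  unfold succs
  split_ifs with h
  · simp only [List.singleton_append, List.nodup_cons]
    refine ⟨fun hmem => ?_, isuc_nodup w⟩
    have hlen := mem_isuc_length hmem
    cases w with
    | nil => simp at h
    | cons a t => simp at hlen
  · simpa using isuc_nodup w

/- ## Step preserves Hyp -/

lemma step_mem_hyp {n : ℕ} {w b : List ℕ} (hw : w ∈ Hyp n) (hs : Step w b) : b ∈ Hyp n := by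
  obtain ⟨h1, h2, h3⟩ := hw
  rcases hs with (⟨x, y, rfl, rfl⟩ | ⟨y, rfl, rfl⟩) | ⟨x, y, rfl, rfl⟩
  · refine ⟨?_, ?_, ?_⟩
    · intro e he
      simp only [List.mem_append, List.mem_cons] at he ⊢
      rcases he with he | he | he | he
      · exact h1 e (by simp [he])
      · omega
      · omega
      · exact h1 e (by simp [he])
    · cases x with
      | nil => simp at h2
      | cons c t => simpa using h2
    · rw [← h3, wordVal_append, wordVal_append]
      simp [wordVal]
      ring
  · refine ⟨?_, by simp, ?_⟩
    · intro e he
      simp only [List.mem_cons] at he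
      rcases he with he | he | he
      · omega
      · omega
      · exact h1 e (by simp [he])
    · rw [← h3]
      simp [wordVal]
      ring
  · refine ⟨?_, ?_, ?_⟩
    · intro e he
      simp only [List.mem_append, List.mem_cons] at he ⊢
      rcases he with he | he | he | he
      · exact h1 e (by simp [he])
      · omega
      · omega
      · exact h1 e (by simp [he])
    · cases x with
      | nil => simp
      | cons c t => simpa using h2
    · rw [← h3, wordVal_append, wordVal_append]
      simp [wordVal]
      ring

/- ## Counting arcs -/

noncomputable def HF (n : ℕ) : Finset (List ℕ) := (hyp_finite n).toFinset

lemma mem_HF {n : ℕ} {w : List ℕ} : w ∈ HF n ↔ w ∈ Hyp n := (hyp_finite n).mem_toFinset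

lemma bFun_card (n : ℕ) : bFun n = (HF n).card := by
  rw [bFun, ← Set.ncard_coe_finset]
  congr 1
  ext w
  simp [mem_HF]

lemma arcs_eq_finset (n : ℕ) :
    arcs n = ↑((HF n).biUnion (fun w => ((succs w).map (fun b => (w, b))).toFinset)) := by
  ext p
  simp only [arcs, Set.mem_setOf_eq, Finset.coe_biUnion, Set.mem_iUnion, Finset.mem_coe,
    List.mem_toFinset, List.mem_map, mem_HF]
  constructor
  · rintro ⟨hp1, hp2, hs⟩
    exact ⟨p.1, hp1, p.2, (mem_succs_iff _ _).1 hs, rfl⟩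
  · rintro ⟨w, hw, b, hb, hp⟩
    obtain ⟨rfl, rfl⟩ : p.1 = w ∧ p.2 = b := by
      rw [← hp]
      exact ⟨rfl, rfl⟩
    have hs : Step p.1 p.2 := (mem_succs_iff _ _).2 hb
    exact ⟨hw, step_mem_hyp hw hs, hs⟩

lemma aFun_eq_sum (n : ℕ) : aFun n = ∑ w ∈ HF n, (succs w).length := by
  rw [aFun, arcs_eq_finset, Set.ncard_coe_finset]
  rw [Finset.card_biUnion]
  · refine Finset.sum_congr rfl (fun w _ => ?_)
    rw [List.toFinset_card_of_nodup, List.length_map]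
    exact List.Nodup.map (fun b c h => by simpa using h) (succs_nodup w)
  · intro w _ w' _ hne
    simp only [Finset.disjoint_left, List.mem_toFinset, List.mem_map]
    rintro p ⟨b, hb, rfl⟩ ⟨b', hb', heq⟩
    exact hne (by simpa using (Prod.ext_iff.1 heq).1.symm)

/- ## Finset-level structure and recurrences -/

lemma HF_zero : HF 0 = {[]} := by
  ext w; simp [mem_HF, hyp_zero]

lemma HF_odd (n : ℕ) : HF (2 * n + 1) = (HF n).image (· ++ [1]) := by
  ext w
  simp [mem_HF, hyp_odd n, Set.mem_image]

lemma HF_even (n : ℕ) :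
    HF (2 * n + 2) = (HF (n + 1)).image (· ++ [0]) ∪ (HF n).image (· ++ [2]) := by
  ext w
  simp [mem_HF, hyp_even n, Set.mem_image]

lemma HF_even_disj (n : ℕ) :
    Disjoint ((HF (n + 1)).image (· ++ [0])) ((HF n).image (· ++ [2])) := by
  simp only [Finset.disjoint_left, Finset.mem_image]
  rintro w ⟨u, -, rfl⟩ ⟨u', -, heq⟩
  have : (2:ℕ) = 0 := (List.append_singleton_inj.1 heq).2
  omega

lemma bFun_zero : bFun 0 = 1 := by rw [bFun_card, HF_zero]; rfl

lemma bFun_odd (n : ℕ) : bFun (2 * n + 1) = bFun n := by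
  rw [bFun_card, bFun_card, HF_odd]
  exact Finset.card_image_of_injective _ (List.append_left_injective _)

lemma bFun_even (n : ℕ) : bFun (2 * n + 2) = bFun (n + 1) + bFun n := by
  rw [bFun_card, bFun_card, bFun_card, HF_even,
    Finset.card_union_of_disjoint (HF_even_disj n),
    Finset.card_image_of_injective _ (List.append_left_injective _),
    Finset.card_image_of_injective _ (List.append_left_injective _)]

lemma bFun_pos (n : ℕ) : 1 ≤ bFun n := by
  induction n using Nat.strong_induction_on with
  | _ n ih =>
    obtain ⟨m, rfl | rfl⟩ := Nat.even_or_odd' n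
    · cases m with
      | zero => rw [show 2*0 = 0 from rfl, bFun_zero]
      | succ k =>
        rw [show 2 * (k+1) = 2*k+2 by ring, bFun_even]
        have := ih k (by omega)
        omega
    · rw [bFun_odd]; exact ih m (by omega)

lemma aFun_zero : aFun 0 = 0 := by
  rw [aFun_eq_sum, HF_zero]
  simp [succs, isuc_nil]

lemma bFun_one : bFun 1 = 1 := by
  have := bFun_odd 0; rw [show 2*0+1 = 1 from rfl, bFun_zero] at this; exact this

lemma aFun_odd (n : ℕ) : aFun (2 * n + 1) = aFun n := by
  rw [aFun_eq_sum, aFun_eq_sum, HF_odd,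
    Finset.sum_image (fun u _ v _ h => List.append_left_injective _ h)]
  exact Finset.sum_congr rfl fun u _ => succs_length_concat_le_one u 1 le_rfl

lemma gcard (n : ℕ) :
    ((HF n).filter (fun u => ¬ u.getLast? = some 2)).card = bFun (n / 2) := by
  obtain ⟨m, rfl | rfl⟩ := Nat.even_or_odd' n
  · cases m with
    | zero =>
      rw [show 2*0 = 0 from rfl, HF_zero]
      rw [show (0:ℕ)/2 = 0 from rfl, bFun_zero]
      rfl
    | succ k =>
      rw [show 2 * (k+1) = 2*k+2 by ring, HF_even, Finset.filter_union]
      have h0 : ((HF (k+1)).image (· ++ [0])).filter (fun u => ¬ u.getLast? = some 2) =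
          (HF (k+1)).image (· ++ [0]) := by
        refine Finset.filter_true_of_mem fun w hw => ?_
        obtain ⟨u, -, rfl⟩ := Finset.mem_image.1 hw
        simp [List.getLast?_concat]
      have h2 : ((HF k).image (· ++ [2])).filter (fun u => ¬ u.getLast? = some 2) = ∅ := by
        refine Finset.filter_false_of_mem fun w hw => ?_
        obtain ⟨u, -, rfl⟩ := Finset.mem_image.1 hw
        simp [List.getLast?_concat]
      rw [h0, h2, Finset.union_empty,
        Finset.card_image_of_injective _ (List.append_left_injective _), ← bFun_card]
      congr 1
      omega
  · rw [HF_odd]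
    have h1 : ((HF m).image (· ++ [1])).filter (fun u => ¬ u.getLast? = some 2) =
        (HF m).image (· ++ [1]) := by
      refine Finset.filter_true_of_mem fun w hw => ?_
      obtain ⟨u, -, rfl⟩ := Finset.mem_image.1 hw
      simp [List.getLast?_concat]
    rw [h1, Finset.card_image_of_injective _ (List.append_left_injective _), ← bFun_card]
    congr 1
    omega

lemma aFun_even (n : ℕ) : aFun (2 * n + 2) = aFun (n + 1) + aFun n + bFun (n / 2) := by
  rw [aFun_eq_sum, HF_even, Finset.sum_union (HF_even_disj n),
    Finset.sum_image (fun u _ v _ h => List.append_left_injective _ h),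
    Finset.sum_image (fun u _ v _ h => List.append_left_injective _ h)]
  have e0 : ∑ u ∈ HF (n+1), (succs (u ++ [0])).length = aFun (n + 1) := by
    rw [aFun_eq_sum]
    exact Finset.sum_congr rfl fun u _ => succs_length_concat_le_one u 0 (by omega)
  have e2 : ∑ u ∈ HF n, (succs (u ++ [2])).length = aFun n + bFun (n / 2) := by
    have key : ∀ u ∈ HF n, (succs (u ++ [2])).length =
        (succs u).length + (if ¬ u.getLast? = some 2 then 1 else 0) := by
      intro u hu
      rw [succs_length_concat_two u]
      have hd : ∀ x ∈ u, x ≤ 2 := (mem_HF.1 hu).1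
      rcases u.eq_nil_or_concat with rfl | ⟨t, d, rfl⟩
      · simp
      · rw [List.concat_eq_append, List.getLast?_concat]
        have hd2 : d ≤ 2 := hd d (by simp)
        have hne : ¬ (t ++ [d] = []) := by simp
        rw [if_neg hne]
        interval_cases d <;> simp
    rw [Finset.sum_congr rfl key, Finset.sum_add_distrib, ← aFun_eq_sum]
    congr 1
    rw [Finset.sum_ite, Finset.sum_const, Finset.sum_const]
    simp only [smul_eq_mul, mul_one, mul_zero, add_zero]
    rw [← gcard n]
  rw [e0, e2]
  omega

/- ## v recurrences -/

lemma bFun_le_aFun (n : ℕ) : bFun n ≤ aFun n + 1 := by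
  induction n using Nat.strong_induction_on with
  | _ n ih =>
    obtain ⟨m, rfl | rfl⟩ := Nat.even_or_odd' n
    · cases m with
      | zero => rw [show 2*0 = 0 from rfl, bFun_zero, aFun_zero]
      | succ k =>
        rw [show 2 * (k+1) = 2*k+2 by ring, bFun_even, aFun_even]
        have h1 := ih (k+1) (by omega)
        have h2 := ih k (by omega)
        have h3 := bFun_pos (k / 2)
        omega
    · rw [bFun_odd, aFun_odd]; exact ih m (by omega)

lemma vFun_zero : vFun 0 = 0 := by
  rw [vFun, aFun_zero, bFun_zero]

lemma vFun_odd (n : ℕ) : vFun (2 * n + 1) = vFun n := by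
  rw [vFun, vFun, aFun_odd, bFun_odd]

lemma vFun_even (n : ℕ) : vFun (2 * n + 2) + 1 = vFun (n + 1) + vFun n + bFun (n / 2) := by
  have h1 := bFun_le_aFun (n + 1)
  have h2 := bFun_le_aFun n
  have h3 := bFun_le_aFun (2 * n + 2)
  have h4 := bFun_pos (n / 2)
  have ha := aFun_even n
  have hb := bFun_even n
  rw [vFun, vFun, vFun]
  omega

/- ## Stern values -/

lemma two_pow_pos (k : ℕ) : 1 ≤ 2 ^ k := Nat.one_le_two_pow

lemma two_pow_succ (k : ℕ) : 2 ^ (k + 1) = 2 * 2 ^ k := by rw [pow_succ]; ring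

lemma bFun_pow (k : ℕ) : bFun (2 ^ k - 1) = 1 := by
  induction k with
  | zero => simpa using bFun_zero
  | succ k ih =>
    have h1 := two_pow_pos k
    rw [show 2 ^ (k+1) - 1 = 2 * (2 ^ k - 1) + 1 by rw [two_pow_succ]; omega, bFun_odd]
    exact ih

lemma bFun_two : bFun 2 = 2 := by
  have := bFun_even 0
  rw [show 2*0+2 = 2 from rfl, bFun_zero, bFun_one] at this
  exact this

lemma bFun_three_pow (k : ℕ) : bFun (3 * 2 ^ k - 1) = 2 := by
  induction k with
  | zero => simpa using bFun_two
  | succ k ih =>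
    have h1 := two_pow_pos k
    rw [show 3 * 2 ^ (k+1) - 1 = 2 * (3 * (2 ^ k) - 1) + 1 by rw [two_pow_succ]; omega, bFun_odd]
    exact ih

lemma bFun_bthree : bFun 3 = 1 := by
  have := bFun_odd 1
  rw [show 2*1+1 = 3 from rfl, bFun_one] at this
  exact this

lemma bFun_four : bFun 4 = 3 := by
  have := bFun_even 1
  rw [show 2*1+2 = 4 from rfl, bFun_two, bFun_one] at this
  omega

lemma bFun_five : bFun 5 = 2 := by
  have := bFun_odd 2
  rw [show 2*2+1 = 5 from rfl, bFun_two] at this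
  exact this

lemma bFun_six : bFun 6 = 3 := by
  have := bFun_even 2
  rw [show 2*2+2 = 6 from rfl, bFun_bthree, bFun_two] at this
  omega

lemma bFun_five_pow (k : ℕ) : bFun (5 * 2 ^ k - 1) = 3 := by
  induction k with
  | zero => simpa using bFun_four
  | succ k ih =>
    have h1 := two_pow_pos k
    rw [show 5 * 2 ^ (k+1) - 1 = 2 * (5 * (2 ^ k) - 1) + 1 by rw [two_pow_succ]; omega, bFun_odd]
    exact ih

lemma bFun_seven_pow (k : ℕ) : bFun (7 * 2 ^ k - 1) = 3 := by
  induction k with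
  | zero => simpa using bFun_six
  | succ k ih =>
    have h1 := two_pow_pos k
    rw [show 7 * 2 ^ (k+1) - 1 = 2 * (7 * (2 ^ k) - 1) + 1 by rw [two_pow_succ]; omega, bFun_odd]
    exact ih

/- converses -/

lemma pow_eq_one' {a : ℕ} (h : 2 ^ a = 1) : a = 0 :=
  Nat.pow_right_injective le_rfl (h.trans (pow_zero 2).symm)

lemma pow_eq_two' {a : ℕ} (h : 2 ^ a = 2) : a = 1 :=
  Nat.pow_right_injective le_rfl (h.trans (pow_one 2).symm)

lemma pow_eq_four' {a : ℕ} (h : 2 ^ a = 4) : a = 2 :=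
  Nat.pow_right_injective le_rfl (h.trans (by norm_num : (4:ℕ) = 2 ^ 2).symm)

lemma pow_add_one_eq_pow {a b : ℕ} (h : 2 ^ a + 1 = 2 ^ b) : a = 0 ∧ b = 1 := by
  cases b with
  | zero => have := two_pow_pos a; simp at h <;> omega
  | succ s =>
    rw [two_pow_succ] at h
    cases a with
    | zero =>
      simp at h
      have : 2 ^ s = 1 := by have := two_pow_pos s; simp_all <;> omega
      exact ⟨rfl, by rw [pow_eq_one' this]⟩
    | succ t =>
      rw [two_pow_succ] at h
      have := two_pow_pos s
      have := two_pow_pos t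
      omega

lemma pow_add_one_eq_three_pow {a b : ℕ} (h : 2 ^ a + 1 = 3 * 2 ^ b) : a = 1 ∧ b = 0 := by
  cases b with
  | zero =>
    simp at h
    have : 2 ^ a = 2 := by omega
    exact ⟨pow_eq_two' this, rfl⟩
  | succ s =>
    rw [two_pow_succ] at h
    cases a with
    | zero => have := two_pow_pos s; simp at h <;> omega
    | succ t =>
      rw [two_pow_succ] at h
      have := two_pow_pos s
      have := two_pow_pos t
      omega

lemma three_pow_add_one_eq_pow {a b : ℕ} (h : 3 * 2 ^ a + 1 = 2 ^ b) : a = 0 ∧ b = 2 := by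
  cases a with
  | zero =>
    simp at h
    have : 2 ^ b = 4 := by omega
    exact ⟨rfl, pow_eq_four' this⟩
  | succ s =>
    rw [two_pow_succ] at h
    cases b with
    | zero => have := two_pow_pos s; simp at h <;> omega
    | succ t =>
      rw [two_pow_succ] at h
      have := two_pow_pos s
      have := two_pow_pos t
      omega

lemma bFun_eq_one {m : ℕ} (h : bFun m = 1) : ∃ k, m = 2 ^ k - 1 := by
  induction m using Nat.strong_induction_on with
  | _ m ih =>
    obtain ⟨j, rfl | rfl⟩ := Nat.even_or_odd' m
    · cases j with
      | zero => exact ⟨0, rfl⟩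
      | succ i =>
        rw [show 2 * (i+1) = 2*i+2 by ring, bFun_even] at h
        have := bFun_pos (i + 1)
        have := bFun_pos i
        omega
    · rw [bFun_odd] at h
      obtain ⟨k, hk⟩ := ih j (by omega) h
      refine ⟨k + 1, ?_⟩
      have := two_pow_pos k
      rw [two_pow_succ]
      omega

lemma bFun_eq_two {m : ℕ} (h : bFun m = 2) : ∃ k, m = 3 * 2 ^ k - 1 := by
  induction m using Nat.strong_induction_on with
  | _ m ih =>
    obtain ⟨j, rfl | rfl⟩ := Nat.even_or_odd' m
    · cases j with
      | zero => rw [show 2*0 = 0 from rfl, bFun_zero] at h; omega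
      | succ i =>
        rw [show 2 * (i+1) = 2*i+2 by ring, bFun_even] at h
        have h1 := bFun_pos (i + 1)
        have h2 := bFun_pos i
        obtain ⟨a, ha⟩ := bFun_eq_one (show bFun i = 1 by omega)
        obtain ⟨b, hb⟩ := bFun_eq_one (show bFun (i+1) = 1 by omega)
        have hpa := two_pow_pos a
        have hpb := two_pow_pos b
        obtain ⟨rfl, rfl⟩ := pow_add_one_eq_pow (show 2 ^ a + 1 = 2 ^ b by omega)
        refine ⟨0, by simp at hpa hpb ⊢; omega⟩
    · rw [bFun_odd] at h
      obtain ⟨k, hk⟩ := ih j (by omega) h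
      refine ⟨k + 1, ?_⟩
      have := two_pow_pos k
      rw [two_pow_succ]
      omega

lemma bFun_eq_three {m : ℕ} (h : bFun m = 3) :
    (∃ k, m = 5 * 2 ^ k - 1) ∨ (∃ k, m = 7 * 2 ^ k - 1) := by
  induction m using Nat.strong_induction_on with
  | _ m ih =>
    obtain ⟨j, rfl | rfl⟩ := Nat.even_or_odd' m
    · cases j with
      | zero => rw [show 2*0 = 0 from rfl, bFun_zero] at h; omega
      | succ i =>
        rw [show 2 * (i+1) = 2*i+2 by ring, bFun_even] at h
        have h1 := bFun_pos (i + 1)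
        have h2 := bFun_pos i
        rcases (by omega : bFun i = 1 ∧ bFun (i+1) = 2 ∨ bFun i = 2 ∧ bFun (i+1) = 1) with
          ⟨e1, e2⟩ | ⟨e1, e2⟩
        · obtain ⟨a, ha⟩ := bFun_eq_one e1
          obtain ⟨b, hb⟩ := bFun_eq_two e2
          have hpa := two_pow_pos a
          have hpb := two_pow_pos b
          obtain ⟨rfl, rfl⟩ := pow_add_one_eq_three_pow (show 2 ^ a + 1 = 3 * 2 ^ b by omega)
          exact Or.inl ⟨0, by simp at ha hb ⊢; omega⟩
        · obtain ⟨a, ha⟩ := bFun_eq_two e1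
          obtain ⟨b, hb⟩ := bFun_eq_one e2
          have hpa := two_pow_pos a
          have hpb := two_pow_pos b
          obtain ⟨rfl, rfl⟩ := three_pow_add_one_eq_pow (show 3 * 2 ^ a + 1 = 2 ^ b by omega)
          exact Or.inr ⟨0, by simp at ha hb ⊢; omega⟩
    · rw [bFun_odd] at h
      rcases ih j (by omega) h with ⟨k, hk⟩ | ⟨k, hk⟩
      · exact Or.inl ⟨k + 1, by have := two_pow_pos k; rw [two_pow_succ]; omega⟩
      · exact Or.inr ⟨k + 1, by have := two_pow_pos k; rw [two_pow_succ]; omega⟩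

/- ## small values of v -/

lemma v1 : vFun 1 = 0 := by have h := vFun_odd 0; norm_num [vFun_zero] at h; exact h
lemma v2 : vFun 2 = 0 := by have h := vFun_even 0; norm_num [v1, vFun_zero, bFun_zero] at h; omega
lemma v3 : vFun 3 = 0 := by have h := vFun_odd 1; norm_num [v1] at h; exact h
lemma v4 : vFun 4 = 0 := by have h := vFun_even 1; norm_num [v2, v1, bFun_zero] at h; omega
lemma v5 : vFun 5 = 0 := by have h := vFun_odd 2; norm_num [v2] at h; exact h
lemma v6 : vFun 6 = 0 := by have h := vFun_even 2; norm_num [v3, v2, bFun_one] at h; omega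
lemma v7 : vFun 7 = 0 := by have h := vFun_odd 3; norm_num [v3] at h; exact h
lemma v8 : vFun 8 = 0 := by have h := vFun_even 3; norm_num [v4, v3, bFun_one] at h; omega
lemma v9 : vFun 9 = 0 := by have h := vFun_odd 4; norm_num [v4] at h; exact h
lemma v10 : vFun 10 = 1 := by have h := vFun_even 4; norm_num [v5, v4, bFun_two] at h; omega
lemma v11 : vFun 11 = 0 := by have h := vFun_odd 5; norm_num [v5] at h; exact h
lemma v12 : vFun 12 = 1 := by have h := vFun_even 5; norm_num [v6, v5, bFun_two] at h; omega
lemma v13 : vFun 13 = 0 := by have h := vFun_odd 6; norm_num [v6] at h; exact h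
lemma v14 : vFun 14 = 0 := by have h := vFun_even 6; norm_num [v7, v6, bFun_bthree] at h; omega
lemma v18 : vFun 18 = 2 := by have h := vFun_even 8; norm_num [v9, v8, bFun_four] at h; omega
lemma v22 : vFun 22 = 2 := by have h := vFun_even 10; norm_num [v11, v10, bFun_five] at h; omega
lemma v24 : vFun 24 = 2 := by have h := vFun_even 11; norm_num [v12, v11, bFun_five] at h; omega
lemma v28 : vFun 28 = 2 := by have h := vFun_even 13; norm_num [v14, v13, bFun_six] at h; omega

/- ## v on families -/

lemma v_pow (k : ℕ) : vFun (2^k) = 0 ∧ vFun (2^k - 1) = 0 ∧ vFun (2^k - 2) = 0 := by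
  induction k with
  | zero => norm_num [v1, vFun_zero]
  | succ k ih =>
    obtain ⟨ih1, ih2, ih3⟩ := ih
    have hp := two_pow_pos k
    have hs := two_pow_succ k
    refine ⟨?_, ?_, ?_⟩
    · have h := vFun_even (2^k - 1)
      rw [show 2 * (2^k - 1) + 2 = 2^(k+1) by omega,
        show 2^k - 1 + 1 = 2^k by omega] at h
      obtain ⟨j, hj⟩ : ∃ j, (2^k - 1)/2 = 2^j - 1 := by
        cases k with
        | zero => exact ⟨0, rfl⟩
        | succ i => exact ⟨i, by have := two_pow_pos i; have := two_pow_succ i; omega⟩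
      rw [hj, bFun_pow j, ih1, ih2] at h
      omega
    · rw [show 2^(k+1) - 1 = 2*(2^k - 1) + 1 by omega, vFun_odd]
      exact ih2
    · cases k with
      | zero => norm_num [vFun_zero]
      | succ i =>
        have hpi := two_pow_pos i
        have hsi := two_pow_succ i
        have h := vFun_even (2^(i+1) - 2)
        rw [show 2 * (2^(i+1) - 2) + 2 = 2^(i+1+1) - 2 by omega,
          show 2^(i+1) - 2 + 1 = 2^(i+1) - 1 by omega,
          show (2^(i+1) - 2)/2 = 2^i - 1 by omega,
          bFun_pow i, ih2, ih3] at h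
        omega

lemma v_three_pow (k : ℕ) : vFun (3 * 2^k - 1) = 0 := by
  induction k with
  | zero => norm_num [v2]
  | succ k ih =>
    have hp := two_pow_pos k
    have hs := two_pow_succ k
    rw [show 3*2^(k+1) - 1 = 2*(3*2^k - 1) + 1 by omega, vFun_odd]
    exact ih

lemma v_six_sub_one (k : ℕ) : vFun (6 * 2^k - 1) = 0 := by
  have hp := two_pow_pos k
  rw [show 6*2^k - 1 = 2*(3*2^k - 1) + 1 by omega, vFun_odd]
  exact v_three_pow k

lemma v_six_pow (k : ℕ) : vFun (6 * 2^k - 2) = k ∧ vFun (6 * 2^k) = k := by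
  induction k with
  | zero => norm_num [v4, v6]
  | succ k ih =>
    obtain ⟨ih1, ih2⟩ := ih
    have hp := two_pow_pos k
    have hs := two_pow_succ k
    constructor
    · have h := vFun_even (6*2^k - 2)
      rw [show 2 * (6*2^k - 2) + 2 = 6*2^(k+1) - 2 by omega,
        show 6*2^k - 2 + 1 = 6*2^k - 1 by omega,
        show (6*2^k - 2)/2 = 3*2^k - 1 by omega,
        bFun_three_pow k, v_six_sub_one k, ih1] at h
      omega
    · have h := vFun_even (6*2^k - 1)
      rw [show 2 * (6*2^k - 1) + 2 = 6*2^(k+1) by omega,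
        show 6*2^k - 1 + 1 = 6*2^k by omega,
        show (6*2^k - 1)/2 = 3*2^k - 1 by omega,
        bFun_three_pow k, v_six_sub_one k, ih2] at h
      omega

lemma v_ten_pow (k : ℕ) :
    1 ≤ vFun (10 * 2^(k+1) - 2) ∧ 1 ≤ vFun (10 * 2^(k+1)) := by
  have hp := two_pow_pos k
  have hs := two_pow_succ k
  constructor
  · have h := vFun_even (10*2^k - 2)
    rw [show 2 * (10*2^k - 2) + 2 = 10*2^(k+1) - 2 by omega,
      show (10*2^k - 2)/2 = 5*2^k - 1 by omega, bFun_five_pow k] at h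
    omega
  · have h := vFun_even (10*2^k - 1)
    rw [show 2 * (10*2^k - 1) + 2 = 10*2^(k+1) by omega,
      show (10*2^k - 1)/2 = 5*2^k - 1 by omega, bFun_five_pow k] at h
    omega

lemma v_fourteen_pow (k : ℕ) :
    1 ≤ vFun (14 * 2^(k+1) - 2) ∧ 1 ≤ vFun (14 * 2^(k+1)) := by
  have hp := two_pow_pos k
  have hs := two_pow_succ k
  constructor
  · have h := vFun_even (14*2^k - 2)
    rw [show 2 * (14*2^k - 2) + 2 = 14*2^(k+1) - 2 by omega,
      show (14*2^k - 2)/2 = 7*2^k - 1 by omega, bFun_seven_pow k] at h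
    omega
  · have h := vFun_even (14*2^k - 1)
    rw [show 2 * (14*2^k - 1) + 2 = 14*2^(k+1) by omega,
      show (14*2^k - 1)/2 = 7*2^k - 1 by omega, bFun_seven_pow k] at h
    omega


/-- An even nonnegative integer `n` satisfies `v(n) = 2` iff `n ∈ {18, 22, 24, 28}`. -/
theorem v_eq_two_iff_even (n : ℕ) (hn : Even n) :
    vFun n = 2 ↔ n ∈ ({18, 22, 24, 28} : Set ℕ) := by
  constructor
  · intro h
    obtain ⟨m, rfl | rfl⟩ := Nat.even_or_odd' n
    swap
    · exfalso; rcases hn with ⟨t, ht⟩; omega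
    cases m with
    | zero => rw [show 2*0 = 0 from rfl, vFun_zero] at h; omega
    | succ j =>
      rw [show 2*(j+1) = 2*j+2 by ring] at h ⊢
      have key := vFun_even j
      have sum3 : vFun (j+1) + vFun j + bFun (j/2) = 3 := by omega
      have hb1 := bFun_pos (j/2)
      have hbcases : bFun (j/2) = 1 ∨ bFun (j/2) = 2 ∨ bFun (j/2) = 3 := by omega
      rcases hbcases with hb | hb | hb
      · exfalso
        rw [hb] at sum3
        obtain ⟨k, hk⟩ := bFun_eq_one hb
        have hp := two_pow_pos k
        have hs := two_pow_succ k
        obtain ⟨p1, p2, p3⟩ := v_pow (k+1)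
        rcases (by omega : j = 2^(k+1) - 2 ∨ j = 2^(k+1) - 1) with hj | hj
        · rw [show j + 1 = 2^(k+1) - 1 by omega, hj, p2, p3] at sum3
          omega
        · rw [show j + 1 = 2^(k+1) by omega, hj, p1, p2] at sum3
          omega
      · rw [hb] at sum3
        obtain ⟨k, hk⟩ := bFun_eq_two hb
        have hp := two_pow_pos k
        have hs := two_pow_succ k
        obtain ⟨q1, q2⟩ := v_six_pow k
        rcases (by omega : j = 6*2^k - 2 ∨ j = 6*2^k - 1) with hj | hj
        · rw [show j + 1 = 6*2^k - 1 by omega, hj, v_six_sub_one k, q1] at sum3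
          have hk1 : k = 1 := by omega
          subst hk1
          rw [show j = 10 by omega]
          norm_num
        · rw [show j + 1 = 6*2^k by omega, hj, v_six_sub_one k, q2] at sum3
          have hk1 : k = 1 := by omega
          subst hk1
          rw [show j = 11 by omega]
          norm_num
      · rw [hb] at sum3
        rcases bFun_eq_three hb with ⟨k, hk⟩ | ⟨k, hk⟩
        · have hp := two_pow_pos k
          cases k with
          | zero =>
            rcases (by norm_num at hk ⊢; omega : j = 8 ∨ j = 9) with hj | hj
            · rw [show j = 8 by omega]; norm_num
            · exfalso
              rw [show j + 1 = 10 by omega, hj, v10, v9] at sum3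
              omega
          | succ i =>
            exfalso
            have hs := two_pow_succ i
            have hpi := two_pow_pos i
            obtain ⟨t1, t2⟩ := v_ten_pow i
            rcases (by omega : j = 10*2^(i+1) - 2 ∨ j = 10*2^(i+1) - 1) with hj | hj
            · rw [hj] at sum3; omega
            · rw [show j + 1 = 10*2^(i+1) by omega] at sum3; omega
        · have hp := two_pow_pos k
          cases k with
          | zero =>
            rcases (by norm_num at hk ⊢; omega : j = 12 ∨ j = 13) with hj | hj
            · exfalso
              rw [show j + 1 = 13 by omega, hj, v13, v12] at sum3
              omega
            · rw [show j = 13 by omega]; norm_num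
          | succ i =>
            exfalso
            have hs := two_pow_succ i
            have hpi := two_pow_pos i
            obtain ⟨t1, t2⟩ := v_fourteen_pow i
            rcases (by omega : j = 14*2^(i+1) - 2 ∨ j = 14*2^(i+1) - 1) with hj | hj
            · rw [hj] at sum3; omega
            · rw [show j + 1 = 14*2^(i+1) by omega] at sum3; omega
  · intro h
    simp only [Set.mem_insert_iff, Set.mem_singleton_iff] at h
    rcases h with rfl | rfl | rfl | rfl
    exacts [v18, v22, v24, v28]
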